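/- arXiv:1902.09064 — 2 statements merged into one kernel-verified Lean document; each statement's English description precedes it below -/
import Mathlib

section
/- Let a_i > 0, t_i > 0, and let I₀ < 0 satisfy I₀ < −3 (so that a_TA > a_i). Define a(t) = a_i (t/t_i)^{2/3}, H(t) = 2/(3t), ξ(t) = (a(t) − a_i)/a_i, and 𝒥(t) = 1 + ξ(t)·I₀. Then the turnaround condition ȧ(t)·I₀ = −3H(t)·[a_i + (a(t) − a_i)·I₀], equivalently 𝒥̇/(H_i 𝒥) = −3H/H_i evaluated at time t, holds exactly when a(t) = a_TA := (3a_i/4)(1 − 1/I₀); and the corresponding time is t_TA = t_i (a_TA/a_i)^{3/2}. Moreover, at t = t_TA, d/dt [a(t)³ 𝒥(t)]^{1/3} = 0. -/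
/-!
Along the power law `a = aᵢ (t/tᵢ)^(2/3)` one has `ȧ = H a`, and
`a³𝒥 = (1 - I₀) a³ + (I₀/aᵢ) a⁴`. Both the turnaround condition (divided by `H`) and
`d/dt (a³𝒥) = 0` (divided by `ȧ a² / aᵢ`) are therefore the same linear equation
`a I₀ + 3 (aᵢ + (a - aᵢ) I₀) = 0` in `a`, whose root is `a_TA`.
Since `a_TA > 0` and `𝒥 = (1 - I₀)/4 > 0` there, the cube root is differentiable at `t_TA`.
-/

open Real

lemma hasDerivAt_mul_div_rpow (A p : ℝ) {T t : ℝ} (hT : 0 < T) (ht : 0 < t) :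
    HasDerivAt (fun s => A * (s / T) ^ p) (p / t * (A * (t / T) ^ p)) t := by
  have hq : 0 < t / T := div_pos ht hT
  have h := (((hasDerivAt_id t).div_const T).rpow_const (p := p) (Or.inl hq.ne')).const_mul A
  refine h.congr_deriv ?_
  rw [id, rpow_sub hq, rpow_one]
  field_simp

lemma mul_div_rpow_of_rpow_inv {A T b p q : ℝ} (hA : 0 < A) (hT : T ≠ 0) (hb : 0 ≤ b)
    (hpq : q * p = 1) : A * (T * (b / A) ^ q / T) ^ p = b := by
  rw [mul_div_cancel_left₀ _ hT, ← rpow_mul (div_nonneg hb hA.le), hpq, rpow_one,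
    mul_div_cancel₀ _ hA.ne']

lemma turnaround_eq_zero_iff {aᵢ I₀ : ℝ} (hI : I₀ ≠ 0) (a : ℝ) :
    a * I₀ + 3 * (aᵢ + (a - aᵢ) * I₀) = 0 ↔ a = 3 * aᵢ / 4 * (1 - 1 / I₀) := by
  constructor
  · intro h
    field_simp
    linear_combination h
  · rintro rfl
    field_simp
    ring

lemma HasDerivAt.cube_mul_one_add_div_mul {a : ℝ → ℝ} {a' t : ℝ} (aᵢ I₀ : ℝ)
    (hA : HasDerivAt a a' t) (haᵢ : aᵢ ≠ 0) :
    HasDerivAt (fun s => a s ^ 3 * (1 + (a s - aᵢ) / aᵢ * I₀))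
      (a' * a t ^ 2 * (a t * I₀ + 3 * (aᵢ + (a t - aᵢ) * I₀)) / aᵢ) t := by
  have h𝒥 := (((hA.sub_const aᵢ).div_const aᵢ).mul_const I₀).const_add 1
  refine ((hA.pow 3).mul h𝒥).congr_deriv ?_
  simp only [Pi.pow_apply]
  field_simp
  ring

lemma deriv_rpow_eq_zero_of_hasDerivAt_zero {f : ℝ → ℝ} {x : ℝ} (p : ℝ)
    (hf : HasDerivAt f 0 x) (hx : f x ≠ 0) : deriv (fun y => f y ^ p) x = 0 := by
  simp [(hf.rpow_const (Or.inl hx)).deriv]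

theorem EdS_turnaround_epoch (aᵢ tᵢ I₀ : ℝ)
    (ha : aᵢ > 0) (ht : tᵢ > 0) (hI : I₀ < -3) :
    let a : ℝ → ℝ := fun t => aᵢ * (t / tᵢ) ^ ((2:ℝ)/3)
    let H : ℝ → ℝ := fun t => 2 / (3 * t)
    let ξ : ℝ → ℝ := fun t => (a t - aᵢ) / aᵢ
    let 𝒥 : ℝ → ℝ := fun t => 1 + ξ t * I₀
    let aTA : ℝ := (3 * aᵢ / 4) * (1 - 1 / I₀)
    let tTA : ℝ := tᵢ * (aTA / aᵢ) ^ ((3:ℝ)/2)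
    (∀ t : ℝ, t > 0 →
      (deriv a t * I₀ = -3 * H t * (aᵢ + (a t - aᵢ) * I₀) ↔ a t = aTA)) ∧
    a tTA = aTA ∧
    deriv (fun t => ((a t)^3 * 𝒥 t) ^ ((1:ℝ)/3)) tTA = 0 := by
  intro a H ξ 𝒥 aTA tTA
  have hI₀ : I₀ ≠ 0 := by linarith
  have haTA_pos : 0 < aTA := by
    have : 1 / I₀ < 0 := by rw [one_div_neg]; linarith
    exact mul_pos (by positivity) (by linarith)
  have hderiv : ∀ t > 0, HasDerivAt a (H t * a t) t := fun t ht₀ =>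
    (hasDerivAt_mul_div_rpow aᵢ _ ht ht₀).congr_deriv (by simp only [H]; ring)
  have haTA : a tTA = aTA := mul_div_rpow_of_rpow_inv ha ht.ne' haTA_pos.le (by norm_num)
  refine ⟨fun t ht₀ => ?_, haTA, ?_⟩
  · have hH : H t ≠ 0 := by simp only [H]; positivity
    rw [(hderiv t ht₀).deriv, ← turnaround_eq_zero_iff hI₀, ← mul_eq_zero_iff_left hH]
    constructor <;> intro h <;> linear_combination h
  · have htTA : 0 < tTA := by positivity
    have h𝒥 : 𝒥 tTA = (1 - I₀) / 4 := by
      simp only [𝒥, ξ, haTA, aTA]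
      field_simp
      ring
    apply deriv_rpow_eq_zero_of_hasDerivAt_zero
    · have h := (hderiv tTA htTA).cube_mul_one_add_div_mul aᵢ I₀ ha.ne'
      rwa [haTA, (turnaround_eq_zero_iff hI₀ aTA).mpr rfl, mul_zero, zero_div] at h
    · rw [h𝒥, haTA]
      have : 0 < 1 - I₀ := by linarith
      positivity
end

section
/- Let Θ̄, ρ̄, σ̄², V, R̄ ≥ 0 denote nonnegative averaged quantities except Θ̄, R̄ ∈ ℝ, and suppose the averaged Hamiltonian constraint (1/3)Θ̄² = 8πG ρ̄ + σ̄² − (1/3)V − (1/2)R̄ + Λ holds with G > 0, ρ̄ > 0, σ̄² ≥ 0, Λ ≥ 0 and V ≥ 0. If Θ̄ = 0 (averaged turnaround) and additionally the kinematical backreaction Q := (2/3)V − 2σ̄² satisfies Q ≤ 0, then R̄ > 0. -/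
theorem averaged_turnaround_requires_positive_curvature_general
    (Θavg ρavg σ2avg V Ravg G Λ : ℝ)
    (hc : (1/3) * Θavg^2 = 8 * Real.pi * G * ρavg + σ2avg - (1/3) * V
        - (1/2) * Ravg + Λ)
    (hG : G > 0) (hρ : ρavg > 0) (hΛ : Λ ≥ 0)
    (hTA : Θavg = 0)
    (hQ : (2/3) * V - 2 * σ2avg ≤ 0) :
    Ravg > 0 := by
  subst hTA
  have hmatter : 0 < 8 * Real.pi * G * ρavg := by positivity
  have hshear_dominates_variance : (1/3) * V ≤ σ2avg := by linarith
  have hcurvature : (1/2) * Ravg = 8 * Real.pi * G * ρavg + (σ2avg - (1/3) * V) + Λ := by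
    linarith
  linarith

theorem averaged_turnaround_requires_positive_curvature
    (Θavg ρavg σ2avg V Ravg G Λ : ℝ)
    (hc : (1/3) * Θavg^2 = 8 * Real.pi * G * ρavg + σ2avg - (1/3) * V
        - (1/2) * Ravg + Λ)
    (hG : G > 0) (hρ : ρavg > 0) (hσ : σ2avg ≥ 0) (hΛ : Λ ≥ 0) (hV : V ≥ 0)
    (hTA : Θavg = 0)
    (hQ : (2/3) * V - 2 * σ2avg ≤ 0) :
    Ravg > 0 :=
  averaged_turnaround_requires_positive_curvature_general Θavg ρavg σ2avg V Ravg G Λ hc hG hρ hΛ hTA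
    hQ
end
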